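/- arXiv:2208.07100 — 4 statements merged into one kernel-verified Lean document; each statement's English description precedes it below -/
import Mathlib

section
/- Let Π be a forward-propagating DatalogMTL program, D a dataset, and t ∈ ℚ a time point. If the projections to (−∞, t] of the least model 𝔍_D of D and of T_Π(𝔍_D) coincide (i.e., 𝔍_D|_{(−∞,t]} = T_Π(𝔍_D)|_{(−∞,t]}), then 𝔍_D|_{(−∞,t]} = can(Π,D)|_{(−∞,t]}, i.e., 𝔍_D already coincides with the canonical interpretation of Π and D on all time points up to t. -/
namespace DatalogMTL

/-- An interval: a nonempty convex subset of the rational timeline. -/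
structure Intvl where
  carrier : Set ℚ
  nonempty : carrier.Nonempty
  convex : ∀ ⦃a b c : ℚ⦄, a ∈ carrier → c ∈ carrier → a ≤ b → b ≤ c → b ∈ carrier

/-- An interval containing only non-negative rationals. -/
def Intvl.Nonneg (ρ : Intvl) : Prop := ∀ t ∈ ρ.carrier, (0 : ℚ) ≤ t

/-- Intervals indexing metric operators: only non-negative rationals. -/
abbrev NNIntvl := {ρ : Intvl // ρ.Nonneg}

/-- Terms: variables or constants (both named by naturals). -/
inductive Term where
  | var (v : ℕ)
  | const (c : ℕ)

/-- A (possibly non-ground) relational atom. -/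
structure Atom where
  pred : ℕ
  args : List Term

/-- A ground relational atom. -/
structure GAtom where
  pred : ℕ
  args : List ℕ

/-- Applying a substitution (assignment of constants to variables) to a term. -/
def Term.subst (σ : ℕ → ℕ) : Term → ℕ
  | Term.var v => σ v
  | Term.const c => c

/-- Applying a substitution to a relational atom, producing a ground atom. -/
def Atom.subst (σ : ℕ → ℕ) (A : Atom) : GAtom := ⟨A.pred, A.args.map (Term.subst σ)⟩

/-- Metric atoms over atoms of type `α`. -/
inductive MA (α : Type) where
  | top : MA α
  | bot : MA α
  | atom (A : α) : MA α
  | diaMinus (ρ : NNIntvl) (M : MA α) : MA α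
  | diaPlus (ρ : NNIntvl) (M : MA α) : MA α
  | boxMinus (ρ : NNIntvl) (M : MA α) : MA α
  | boxPlus (ρ : NNIntvl) (M : MA α) : MA α
  | since (ρ : NNIntvl) (M₁ M₂ : MA α) : MA α
  | untl (ρ : NNIntvl) (M₁ M₂ : MA α) : MA α

def MA.map {α β : Type} (g : α → β) : MA α → MA β
  | .top => .top
  | .bot => .bot
  | .atom A => .atom (g A)
  | .diaMinus ρ M => .diaMinus ρ (M.map g)
  | .diaPlus ρ M => .diaPlus ρ (M.map g)
  | .boxMinus ρ M => .boxMinus ρ (M.map g)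
  | .boxPlus ρ M => .boxPlus ρ (M.map g)
  | .since ρ M₁ M₂ => .since ρ (M₁.map g) (M₂.map g)
  | .untl ρ M₁ M₂ => .untl ρ (M₁.map g) (M₂.map g)

/-- Grounding a metric atom by a substitution. -/
def MA.subst (M : MA Atom) (σ : ℕ → ℕ) : MA GAtom := M.map (Atom.subst σ)

/-- An interpretation: for each ground relational atom and rational time point,
whether the atom holds there. -/
def Interp : Type := GAtom → ℚ → Prop

/-- Containment of interpretations. -/
def leI (I J : Interp) : Prop := ∀ A t, I A t → J A t

/-- Satisfaction of ground metric atoms at a time point. -/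
def sat (I : Interp) : ℚ → MA GAtom → Prop
  | _, .top => True
  | _, .bot => False
  | t, .atom A => I A t
  | t, .diaMinus ρ M => ∃ t', (t - t') ∈ ρ.1.carrier ∧ sat I t' M
  | t, .diaPlus ρ M => ∃ t', (t' - t) ∈ ρ.1.carrier ∧ sat I t' M
  | t, .boxMinus ρ M => ∀ t', (t - t') ∈ ρ.1.carrier → sat I t' M
  | t, .boxPlus ρ M => ∀ t', (t' - t) ∈ ρ.1.carrier → sat I t' M
  | t, .since ρ M₁ M₂ =>
      ∃ t', (t - t') ∈ ρ.1.carrier ∧ sat I t' M₂ ∧ ∀ t'', t' < t'' → t'' < t → sat I t'' M₁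
  | t, .untl ρ M₁ M₂ =>
      ∃ t', (t' - t) ∈ ρ.1.carrier ∧ sat I t' M₂ ∧ ∀ t'', t < t'' → t'' < t' → sat I t'' M₁

/-- Satisfaction of a ground metric atom throughout a set of time points. -/
def satSet (I : Interp) (M : MA GAtom) (s : Set ℚ) : Prop := ∀ t ∈ s, sat I t M

/-- Satisfaction of a ground metric atom throughout an interval. -/
def satIvl (I : Interp) (M : MA GAtom) (ρ : Intvl) : Prop := satSet I M ρ.carrier

/-- A fact `M@ρ`. -/
structure Fact where
  atom : GAtom
  ivl : Intvl

/-- The least model of a set of facts. -/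
def interpOf (F : Set Fact) : Interp := fun A t => ∃ f ∈ F, f.atom = A ∧ t ∈ f.ivl.carrier

/-- A dataset: a finite set of facts. -/
structure Dataset where
  facts : Set Fact
  finite : facts.Finite

/-- The least model `𝔍_D` of a dataset `D`. -/
def Dataset.interp (D : Dataset) : Interp := interpOf D.facts

/-- An interpretation satisfies a fact if the atom holds throughout the interval. -/
def satFact (I : Interp) (f : Fact) : Prop := satIvl I (MA.atom f.atom) f.ivl

/-- The head grammar `M' ::= ⊤ | P(s) | ■⁻ρ M' | ■⁺ρ M'`. -/
inductive HeadOK {α : Type} : MA α → Prop where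
  | top : HeadOK MA.top
  | atom (A : α) : HeadOK (MA.atom A)
  | boxMinus (ρ : NNIntvl) {M : MA α} : HeadOK M → HeadOK (MA.boxMinus ρ M)
  | boxPlus (ρ : NNIntvl) {M : MA α} : HeadOK M → HeadOK (MA.boxPlus ρ M)

/-- Variables of a relational atom. -/
def Atom.vars (A : Atom) : Set ℕ := {v | Term.var v ∈ A.args}

/-- Variables of a metric atom. -/
def MA.vars : MA Atom → Set ℕ
  | .top => ∅
  | .bot => ∅
  | .atom A => A.vars
  | .diaMinus _ M => M.vars
  | .diaPlus _ M => M.vars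
  | .boxMinus _ M => M.vars
  | .boxPlus _ M => M.vars
  | .since _ M₁ M₂ => M₁.vars ∪ M₂.vars
  | .untl _ M₁ M₂ => M₁.vars ∪ M₂.vars

/-- Variables of a metric atom occurring outside left operands of `S` and `U`. -/
def MA.safeVars : MA Atom → Set ℕ
  | .top => ∅
  | .bot => ∅
  | .atom A => A.vars
  | .diaMinus _ M => M.safeVars
  | .diaPlus _ M => M.safeVars
  | .boxMinus _ M => M.safeVars
  | .boxPlus _ M => M.safeVars
  | .since _ _ M₂ => M₂.safeVars
  | .untl _ _ M₂ => M₂.safeVars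

/-- A (safe) rule `M' ← M₁ ∧ … ∧ Mₙ`, `n ≥ 1`, with head from the head grammar. -/
structure Rule where
  head : MA Atom
  body : List (MA Atom)
  body_ne : body ≠ []
  head_ok : HeadOK head
  safe : head.vars ⊆ ⋃ M ∈ body, MA.safeVars M

/-- A program: a finite set of (safe) rules. -/
structure Program where
  rules : Set Rule
  finite : rules.Finite

/-- An interpretation satisfies a rule if it satisfies all its ground instances. -/
def modelsRule (I : Interp) (r : Rule) : Prop :=
  ∀ (σ : ℕ → ℕ) (t : ℚ), (∀ M ∈ r.body, sat I t (M.subst σ)) → sat I t (r.head.subst σ)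

def modelsProgram (I : Interp) (P : Program) : Prop := ∀ r ∈ P.rules, modelsRule I r

def modelsDataset (I : Interp) (D : Dataset) : Prop := ∀ f ∈ D.facts, satFact I f

/-- `gEntails M s A u` : every interpretation satisfying the ground metric atom `M`
throughout `s` satisfies the ground relational atom `A` throughout `u`. -/
def gEntails (M : MA GAtom) (s : Set ℚ) (A : GAtom) (u : Set ℚ) : Prop :=
  ∀ J : Interp, satSet J M s → ∀ t ∈ u, J A t

/-- The immediate consequence operator `T_Π`: the least interpretation containing `I`
and satisfying, for each ground rule instance whose body is satisfied by `I` at `t`,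
the head of the instance at `t`. -/
def TP (P : Program) (I : Interp) : Interp := fun A t' =>
  I A t' ∨ ∃ r ∈ P.rules, ∃ (σ : ℕ → ℕ) (t : ℚ),
    (∀ M ∈ r.body, sat I t (M.subst σ)) ∧ gEntails (r.head.subst σ) {t} A {t'}

/-- Finite powers of the immediate consequence operator. -/
def TPiter (P : Program) : ℕ → Interp → Interp
  | 0, I => I
  | k + 1, I => TP P (TPiter P k I)

/-- The canonical interpretation `can(Π,D) = T_Π^{ω₁}(𝔍_D)`, characterised as the least
prefixed point of the (monotone, inflationary) operator `T_Π` containing the given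
interpretation (the transfinite iteration stabilises at `ω₁` on this least fixpoint). -/
def canon (P : Program) (I : Interp) : Interp := fun A t =>
  ∀ J : Interp, leI I J → leI (TP P J) J → J A t

/-- Projection of an interpretation to a set of time points. -/
def proj (I : Interp) (s : Set ℚ) : Interp := fun A t => t ∈ s ∧ I A t

/-- Metric atoms mentioning only relational atoms and past operators `◆⁻, ■⁻, S`. -/
def MA.PastOnly {α : Type} : MA α → Prop
  | .atom _ => True
  | .diaMinus _ M => M.PastOnly
  | .boxMinus _ M => M.PastOnly
  | .since _ M₁ M₂ => M₁.PastOnly ∧ M₂.PastOnly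
  | _ => False

/-- Metric atoms mentioning only relational atoms and future operators `◆⁺, ■⁺, U`. -/
def MA.FutureOnly {α : Type} : MA α → Prop
  | .atom _ => True
  | .diaPlus _ M => M.FutureOnly
  | .boxPlus _ M => M.FutureOnly
  | .untl _ M₁ M₂ => M₁.FutureOnly ∧ M₂.FutureOnly
  | _ => False

def Rule.ForwardProp (r : Rule) : Prop :=
  (∀ M ∈ r.body, MA.PastOnly M) ∧ MA.FutureOnly r.head

def Rule.BackwardProp (r : Rule) : Prop :=
  (∀ M ∈ r.body, MA.FutureOnly M) ∧ MA.PastOnly r.head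

def Program.ForwardProp (P : Program) : Prop := ∀ r ∈ P.rules, r.ForwardProp

def Program.BackwardProp (P : Program) : Prop := ∀ r ∈ P.rules, r.BackwardProp

/-- Predicates mentioned in a metric atom. -/
def MA.apreds : MA Atom → Set ℕ
  | .top => ∅
  | .bot => ∅
  | .atom A => {A.pred}
  | .diaMinus _ M => M.apreds
  | .diaPlus _ M => M.apreds
  | .boxMinus _ M => M.apreds
  | .boxPlus _ M => M.apreds
  | .since _ M₁ M₂ => M₁.apreds ∪ M₂.apreds
  | .untl _ M₁ M₂ => M₁.apreds ∪ M₂.apreds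

def Rule.headPreds (r : Rule) : Set ℕ := r.head.apreds

def Rule.bodyPreds (r : Rule) : Set ℕ := ⋃ M ∈ r.body, MA.apreds M

/-- Edge of the dependency graph: some rule mentions `Q` in its body and `R` in its head. -/
def DepEdge (P : Program) (Q R : ℕ) : Prop :=
  ∃ r ∈ P.rules, Q ∈ r.bodyPreds ∧ R ∈ r.headPreds

/-- A predicate is recursive if the dependency graph has a path containing a cycle
and ending in it. -/
def Recursive (P : Program) (Q : ℕ) : Prop :=
  ∃ R : ℕ, Relation.TransGen (DepEdge P) R R ∧ Relation.ReflTransGen (DepEdge P) R Q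

def Program.restrict (P : Program) (p : Rule → Prop) : Program :=
  ⟨{r | r ∈ P.rules ∧ p r}, P.finite.subset (fun _ hr => hr.1)⟩

/-- The non-recursive fragment: rules whose heads mention only non-recursive predicates. -/
def Program.nrFrag (P : Program) : Program :=
  P.restrict (fun r => ∀ Q ∈ r.headPreds, ¬ Recursive P Q)

/-- The recursive fragment: the remaining rules. -/
def Program.recFrag (P : Program) : Program :=
  P.restrict (fun r => ¬ ∀ Q ∈ r.headPreds, ¬ Recursive P Q)

/-- Removing a single rule from a program. -/
def Program.erase (P : Program) (r : Rule) : Program := P.restrict (fun r' => r' ≠ r)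

/-- `ρ` is a subset-maximal interval on which `I` satisfies `M`. -/
def MaximalSat (I : Interp) (M : MA GAtom) (ρ : Intvl) : Prop :=
  satIvl I M ρ ∧ ∀ ρ' : Intvl, ρ.carrier ⊆ ρ'.carrier → satIvl I M ρ' → ρ'.carrier = ρ.carrier

/-- The single relational atom occurring in a head-shaped metric atom (if any). -/
def MA.headAtom {α : Type} : MA α → Option α
  | .atom A => some A
  | .boxMinus _ M => M.headAtom
  | .boxPlus _ M => M.headAtom
  | _ => none

/-- The set `r[F]` of facts derived by rule `r` from the facts `F` (Definition 1). -/
def Rule.derive (r : Rule) (F : Set Fact) : Set Fact :=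
  { f | ∃ (σ : ℕ → ℕ) (ρs : Fin r.body.length → Intvl),
      (∀ i : Fin r.body.length, MaximalSat (interpOf F) ((r.body.get i).subst σ) (ρs i)) ∧
      (r.head.subst σ).headAtom = some f.atom ∧
      gEntails (r.head.subst σ) (⋂ i, (ρs i).carrier) f.atom f.ivl.carrier ∧
      ∀ ρ' : Intvl, f.ivl.carrier ⊆ ρ'.carrier →
        gEntails (r.head.subst σ) (⋂ i, (ρs i).carrier) f.atom ρ'.carrier →
        ρ'.carrier = f.ivl.carrier }

/-- The set `Π[F]` of facts derived from `F` by one-step application of `Π`. -/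
def Program.derive (P : Program) (F : Set Fact) : Set Fact := ⋃ r ∈ P.rules, Rule.derive r F

/-- The coalescing `F₁ ⋓ F₂`: all facts `M@ρ` such that the least model of `F₁ ∪ F₂`
satisfies `M@ρ` but no `M@ρ'` for an interval `ρ'` strictly containing `ρ`. -/
def coalesce (F₁ F₂ : Set Fact) : Set Fact :=
  { f | satIvl (interpOf (F₁ ∪ F₂)) (MA.atom f.atom) f.ivl ∧
        ∀ ρ' : Intvl, f.ivl.carrier ⊂ ρ'.carrier →
          ¬ satIvl (interpOf (F₁ ∪ F₂)) (MA.atom f.atom) ρ' }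

/-! ### Auxiliary lemmas -/

lemma sat_mono {I I' : Interp} (h : leI I I') :
    ∀ (M : MA GAtom) (s : ℚ), sat I s M → sat I' s M := by
  intro M
  induction M with
  | top => intro s _; trivial
  | bot => intro s hs; exact hs
  | atom A => intro s hs; exact h A s hs
  | diaMinus ρ M ih => rintro s ⟨v, hv, hm⟩; exact ⟨v, hv, ih v hm⟩
  | diaPlus ρ M ih => rintro s ⟨v, hv, hm⟩; exact ⟨v, hv, ih v hm⟩
  | boxMinus ρ M ih => intro s hs v hv; exact ih v (hs v hv)
  | boxPlus ρ M ih => intro s hs v hv; exact ih v (hs v hv)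
  | since ρ M₁ M₂ ih₁ ih₂ =>
      rintro s ⟨v, hv, h2, h1⟩
      exact ⟨v, hv, ih₂ v h2, fun w hw1 hw2 => ih₁ w (h1 w hw1 hw2)⟩
  | untl ρ M₁ M₂ ih₁ ih₂ =>
      rintro s ⟨v, hv, h2, h1⟩
      exact ⟨v, hv, ih₂ v h2, fun w hw1 hw2 => ih₁ w (h1 w hw1 hw2)⟩

lemma sat_past {I I' : Interp} :
    ∀ (M : MA GAtom), MA.PastOnly M → ∀ s : ℚ,
      (∀ A v, v ≤ s → I A v → I' A v) → sat I s M → sat I' s M := by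
  intro M
  induction M with
  | top => intro hp; exact absurd hp (by simp [MA.PastOnly])
  | bot => intro hp; exact absurd hp (by simp [MA.PastOnly])
  | atom A => intro _ s hle hs; exact hle A s le_rfl hs
  | diaMinus ρ M ih =>
      intro hp s hle hs
      obtain ⟨v, hv, hm⟩ := hs
      have hv' : v ≤ s := by have := ρ.2 _ hv; linarith
      exact ⟨v, hv, ih hp v (fun A w hw => hle A w (hw.trans hv')) hm⟩
  | diaPlus ρ M ih => intro hp; exact absurd hp (by simp [MA.PastOnly])
  | boxMinus ρ M ih =>
      intro hp s hle hs v hv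
      have hv' : v ≤ s := by have := ρ.2 _ hv; linarith
      exact ih hp v (fun A w hw => hle A w (hw.trans hv')) (hs v hv)
  | boxPlus ρ M ih => intro hp; exact absurd hp (by simp [MA.PastOnly])
  | since ρ M₁ M₂ ih₁ ih₂ =>
      intro hp s hle hs
      obtain ⟨hp1, hp2⟩ := hp
      obtain ⟨v, hv, h2, h1⟩ := hs
      have hv' : v ≤ s := by have := ρ.2 _ hv; linarith
      refine ⟨v, hv, ih₂ hp2 v (fun A w hw => hle A w (hw.trans hv')) h2,
        fun w hw1 hw2 => ih₁ hp1 w (fun A x hx => hle A x (hx.trans hw2.le)) (h1 w hw1 hw2)⟩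
  | untl ρ M₁ M₂ ih₁ ih₂ => intro hp; exact absurd hp (by simp [MA.PastOnly])

lemma pastOnly_map {α β : Type} (g : α → β) :
    ∀ {M : MA α}, M.PastOnly → (M.map g).PastOnly := by
  intro M
  induction M <;> simp_all [MA.map, MA.PastOnly]

lemma futureOnly_map {α β : Type} (g : α → β) :
    ∀ {M : MA α}, M.FutureOnly → (M.map g).FutureOnly := by
  intro M
  induction M <;> simp_all [MA.map, MA.FutureOnly]

lemma headOK_map {α β : Type} (g : α → β) :
    ∀ {M : MA α}, HeadOK M → HeadOK (M.map g) := by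
  intro M hM
  induction hM with
  | top => exact HeadOK.top
  | atom A => exact HeadOK.atom _
  | boxMinus ρ _ ih => exact HeadOK.boxMinus ρ ih
  | boxPlus ρ _ ih => exact HeadOK.boxPlus ρ ih

lemma head_key {M : MA GAtom} (hk : HeadOK M) (hf : MA.FutureOnly M) (s : ℚ) :
    ∀ v, s ≤ v → sat (fun _ w => s ≤ w) v M := by
  induction hk with
  | top => exact absurd hf (by simp [MA.FutureOnly])
  | atom A => intro v hv; exact hv
  | boxMinus ρ _ ih => exact absurd hf (by simp [MA.FutureOnly])
  | boxPlus ρ hM ih =>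
      intro v hv v' hv'
      have := ρ.2 _ hv'
      exact ih hf v' (by linarith)

lemma head_le {M : MA GAtom} (hk : HeadOK M) (hf : MA.FutureOnly M) {s u : ℚ} {A : GAtom}
    (hg : gEntails M {s} A {u}) : s ≤ u :=
  hg (fun _ w => s ≤ w)
    (fun v hv => by rw [Set.mem_singleton_iff] at hv; subst hv; exact head_key hk hf v v le_rfl)
    u rfl

lemma leI_canon (P : Program) (I : Interp) : leI I (canon P I) :=
  fun A t h J hIJ _ => hIJ A t h

lemma TP_mono (P : Program) {I I' : Interp} (h : leI I I') : leI (TP P I) (TP P I') := by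
  rintro A u (h0 | ⟨r, hr, σ, s, hb, hg⟩)
  · exact Or.inl (h A u h0)
  · exact Or.inr ⟨r, hr, σ, s, fun M hM => sat_mono h _ s (hb M hM), hg⟩

lemma canon_prefixed (P : Program) (I : Interp) : leI (TP P (canon P I)) (canon P I) :=
  fun A u h J hIJ hpre => hpre A u (TP_mono P (fun B v hc => hc J hIJ hpre) A u h)

/-- Lemma 2: for a forward-propagating program, if the least model of `D`
and its image under `T_Π` coincide on `(-∞, t]`, then the least model of `D` coincides
with the canonical interpretation `can(Π,D)` on `(-∞, t]`. -/
theorem forward_projection_fixpoint (P : Program) (D : Dataset) (t : ℚ)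
    (hfp : P.ForwardProp)
    (h : proj D.interp (Set.Iic t) = proj (TP P D.interp) (Set.Iic t)) :
    proj D.interp (Set.Iic t) = proj (canon P D.interp) (Set.Iic t) := by
  set C : Interp := canon P D.interp with hC
  set J : Interp := fun A u => if u ≤ t then D.interp A u else C A u with hJ
  have hDC : leI D.interp C := leI_canon P D.interp
  have hJC : leI J C := by
    intro A u h
    by_cases hu : u ≤ t
    · simp only [hJ] at h; rw [if_pos hu] at h; exact hDC A u h
    · simp only [hJ] at h; rw [if_neg hu] at h; exact h
  have hDJ : leI D.interp J := by
    intro A u h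
    by_cases hu : u ≤ t
    · show if u ≤ t then D.interp A u else C A u
      rw [if_pos hu]; exact h
    · show if u ≤ t then D.interp A u else C A u
      rw [if_neg hu]; exact hDC A u h
  have hTPtoD : ∀ A u, u ≤ t → TP P D.interp A u → D.interp A u := by
    intro A u hu hTP
    have h' : proj (TP P D.interp) (Set.Iic t) A u := ⟨hu, hTP⟩
    rw [← h] at h'
    exact h'.2
  have hpre : leI (TP P J) J := by
    rintro A u (hJu | ⟨r, hr, σ, s, hb, hg⟩)
    · exact hJu
    obtain ⟨hb_past, hh_fut⟩ := hfp r hr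
    by_cases hu : u ≤ t
    · have hsu : s ≤ u :=
        head_le (headOK_map _ r.head_ok) (futureOnly_map _ hh_fut) hg
      have hbD : ∀ M ∈ r.body, sat D.interp s (M.subst σ) := by
        intro M hM
        refine sat_past _ (pastOnly_map _ (hb_past M hM)) s ?_ (hb M hM)
        intro A v hv hJv
        simp only [hJ] at hJv
        rwa [if_pos (hv.trans (hsu.trans hu))] at hJv
      have hT : TP P D.interp A u := Or.inr ⟨r, hr, σ, s, hbD, hg⟩
      show if u ≤ t then D.interp A u else C A u
      rw [if_pos hu]
      exact hTPtoD A u hu hT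
    · have hbC : ∀ M ∈ r.body, sat C s (M.subst σ) :=
        fun M hM => sat_mono hJC _ s (hb M hM)
      have hT : TP P C A u := Or.inr ⟨r, hr, σ, s, hbC, hg⟩
      show if u ≤ t then D.interp A u else C A u
      rw [if_neg hu]
      exact canon_prefixed P D.interp A u hT
  have hCJ : leI C J := fun A u hc => hc J hDJ hpre
  funext A u
  apply propext
  constructor
  · rintro ⟨hu, hD⟩; exact ⟨hu, hDC A u hD⟩
  · rintro ⟨hu, hc⟩
    refine ⟨hu, ?_⟩
    have := hCJ A u hc
    simp only [hJ] at this
    rwa [if_pos (show u ≤ t from hu)] at this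

end DatalogMTL
end

section
/- Let Π be a DatalogMTL program, D a dataset, and k ∈ ℕ. If T_Π^k(𝔍_D) and T_Π^{k+1}(𝔍_D) satisfy exactly the same facts P(c)@t for all ground relational atoms P(c) whose predicate P is non-recursive in Π and all t ∈ ℚ, then can(Π_nr, D) ⊆ T_Π^{k+1}(𝔍_D), where Π_nr is the non-recursive fragment of Π. -/
namespace DatalogMTL

lemma leI_TPiter (P : Program) (I : Interp) (n : ℕ) : leI I (TPiter P n I) := by
  induction n with
  | zero => exact fun A t h => h
  | succ n ih => exact fun A t h => Or.inl (ih A t h)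

/-- For a head-shaped metric atom there is an interpretation satisfying it everywhere,
whose positive atoms all have predicates among the head's predicates. -/
lemma head_witness (H : MA Atom) (hH : HeadOK H) (σ : ℕ → ℕ) :
    ∃ J : Interp, (∀ s, sat J s (H.subst σ)) ∧ ∀ A t, J A t → A.pred ∈ H.apreds := by
  induction hH with
  | top => exact ⟨fun _ _ => False, fun _ => trivial, fun _ _ h => h.elim⟩
  | atom A₀ =>
      refine ⟨fun C _ => C = A₀.subst σ, fun _ => rfl, ?_⟩
      rintro A t rfl
      simp [MA.apreds, Atom.subst]
  | boxMinus ρ hM ih =>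
      obtain ⟨J, h1, h2⟩ := ih
      exact ⟨J, fun _ t' _ => h1 t', h2⟩
  | boxPlus ρ hM ih =>
      obtain ⟨J, h1, h2⟩ := ih
      exact ⟨J, fun _ t' _ => h1 t', h2⟩

/-- Satisfaction of a grounded metric atom only depends on the interpretation of
atoms whose predicate is mentioned in the metric atom. -/
lemma sat_congr (I J : Interp) (M : MA Atom) (σ : ℕ → ℕ)
    (h : ∀ A : GAtom, A.pred ∈ M.apreds → ∀ t, I A t ↔ J A t) :
    ∀ t, sat I t (M.subst σ) ↔ sat J t (M.subst σ) := by
  revert h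
  induction M with
  | top => exact fun _ _ => Iff.rfl
  | bot => exact fun _ _ => Iff.rfl
  | atom A => exact fun h t => h (A.subst σ) rfl t
  | diaMinus ρ M ih =>
      intro h t
      exact exists_congr fun t' => and_congr_right fun _ => ih h t'
  | diaPlus ρ M ih =>
      intro h t
      exact exists_congr fun t' => and_congr_right fun _ => ih h t'
  | boxMinus ρ M ih =>
      intro h t
      exact forall_congr' fun t' => imp_congr_right fun _ => ih h t'
  | boxPlus ρ M ih =>
      intro h t
      exact forall_congr' fun t' => imp_congr_right fun _ => ih h t'
  | since ρ M₁ M₂ ih₁ ih₂ =>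
      intro h t
      have h₁ : ∀ A : GAtom, A.pred ∈ M₁.apreds → ∀ t, I A t ↔ J A t :=
        fun A hA => h A (Set.mem_union_left _ hA)
      have h₂ : ∀ A : GAtom, A.pred ∈ M₂.apreds → ∀ t, I A t ↔ J A t :=
        fun A hA => h A (Set.mem_union_right _ hA)
      exact exists_congr fun t' => and_congr_right fun _ =>
        and_congr (ih₂ h₂ t') (forall_congr' fun t'' => imp_congr_right fun _ =>
          imp_congr_right fun _ => ih₁ h₁ t'')
  | untl ρ M₁ M₂ ih₁ ih₂ =>
      intro h t
      have h₁ : ∀ A : GAtom, A.pred ∈ M₁.apreds → ∀ t, I A t ↔ J A t :=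
        fun A hA => h A (Set.mem_union_left _ hA)
      have h₂ : ∀ A : GAtom, A.pred ∈ M₂.apreds → ∀ t, I A t ↔ J A t :=
        fun A hA => h A (Set.mem_union_right _ hA)
      exact exists_congr fun t' => and_congr_right fun _ =>
        and_congr (ih₂ h₂ t') (forall_congr' fun t'' => imp_congr_right fun _ =>
          imp_congr_right fun _ => ih₁ h₁ t'')

/-- Lemma 1: if `T_Π^k(𝔍_D)` and `T_Π^{k+1}(𝔍_D)` satisfy the same facts
on all non-recursive predicates, then `can(Π_nr, D) ⊆ T_Π^{k+1}(𝔍_D)`. -/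
theorem nonrecursive_canon_contained (P : Program) (D : Dataset) (k : ℕ)
    (h : ∀ A : GAtom, ¬ Recursive P A.pred →
      ∀ t : ℚ, TPiter P k D.interp A t ↔ TPiter P (k + 1) D.interp A t) :
    leI (canon P.nrFrag D.interp) (TPiter P (k + 1) D.interp) := by
  intro A t hcan
  refine hcan (TPiter P (k + 1) D.interp) (leI_TPiter P D.interp (k + 1)) ?_
  intro B t' hB
  rcases hB with hB | ⟨r, hr, σ, s, hbody, hg⟩
  · exact hB
  · obtain ⟨hrP, hnr⟩ := hr
    obtain ⟨J, hJsat, hJpred⟩ := head_witness r.head r.head_ok σ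
    have hBpred : B.pred ∈ r.headPreds :=
      hJpred B t' (hg J (fun u _ => hJsat u) t' rfl)
    have hnrB : ¬ Recursive P B.pred := hnr B.pred hBpred
    have hbodynr : ∀ Q ∈ r.bodyPreds, ¬ Recursive P Q := by
      intro Q hQ hrec
      obtain ⟨R, hc, hp⟩ := hrec
      exact hnrB ⟨R, hc, hp.tail ⟨r, hrP, hQ, hBpred⟩⟩
    have hbody' : ∀ M ∈ r.body, sat (TPiter P k D.interp) s (M.subst σ) := by
      intro M hM
      refine (sat_congr (TPiter P k D.interp) (TPiter P (k + 1) D.interp) M σ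
        (fun C hC u => h C (hbodynr C.pred (Set.mem_biUnion hM hC)) u) s).mpr
        (hbody M hM)
    exact Or.inr ⟨r, hrP, σ, s, hbody', hg⟩

end DatalogMTL
end

section
/- For every DatalogMTL program Π and dataset D, the dataset D ⋓ Π[D] obtained by one round of rule applications followed by coalescing represents exactly the image of the immediate consequence operator: 𝔍_{D ⋓ Π[D]} = T_Π(𝔍_D). -/
namespace DatalogMTL

/-!
A head built from `■⁻`, `■⁺` around a relational atom holds at `t` exactly when its atom
holds on an explicit set of time points, so entailment by such a head on a set `s` amounts to
containment in the union of these sets over `s`. If a ground rule instance fires at `t` and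
forces its atom at `t'`, then taking the maximal body intervals around `t` (order-connected
components) and then the maximal interval around `t'` inside the region they force yields a
fact of `Π[D]` containing `t'`; conversely every point of a fact of `Π[D]` is forced from some
point of the intersection of its body intervals. Coalescing does not change the least model,
since every point lies in its maximal interval.
-/

namespace Intvl

theorem ordConnected (ρ : Intvl) : ρ.carrier.OrdConnected :=
  ⟨fun _ ha _ hc _ hb => ρ.convex ha hc hb.1 hb.2⟩

def ofOrdConnected (s : Set ℚ) (hne : s.Nonempty) (hs : s.OrdConnected) : Intvl :=
  ⟨s, hne, fun _ _ _ ha hc hab hbc => hs.out ha hc ⟨hab, hbc⟩⟩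

theorem exists_maximal_subset_of_mem {S : Set ℚ} {t : ℚ} (ht : t ∈ S) :
    ∃ ρ : Intvl, t ∈ ρ.carrier ∧ ρ.carrier ⊆ S ∧
      ∀ ρ' : Intvl, ρ.carrier ⊆ ρ'.carrier → ρ'.carrier ⊆ S → ρ'.carrier = ρ.carrier := by
  have htC : t ∈ S.ordConnectedComponent t := Set.self_mem_ordConnectedComponent.mpr ht
  refine ⟨ofOrdConnected _ ⟨t, htC⟩ inferInstance, htC, Set.ordConnectedComponent_subset, ?_⟩
  intro ρ' hCρ' hρ'S
  have := ρ'.ordConnected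
  exact (Set.subset_ordConnectedComponent (hCρ' htC) hρ'S).antisymm hCρ'

end Intvl

theorem interpOf_union (F₁ F₂ : Set Fact) (A : GAtom) (t : ℚ) :
    interpOf (F₁ ∪ F₂) A t ↔ interpOf F₁ A t ∨ interpOf F₂ A t := by
  simp only [interpOf, Set.mem_union, or_and_right, exists_or]

theorem interpOf_biUnion {ι : Type*} (s : Set ι) (F : ι → Set Fact) (A : GAtom) (t : ℚ) :
    interpOf (⋃ i ∈ s, F i) A t ↔ ∃ i ∈ s, interpOf (F i) A t := by
  simp only [interpOf, Set.mem_iUnion, exists_prop]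
  exact ⟨fun ⟨f, ⟨i, hi, hf⟩, hfA⟩ => ⟨i, hi, f, hf, hfA⟩,
    fun ⟨i, hi, f, hf, hfA⟩ => ⟨f, ⟨i, hi, hf⟩, hfA⟩⟩

theorem interpOf_coalesce (F₁ F₂ : Set Fact) :
    interpOf (coalesce F₁ F₂) = interpOf (F₁ ∪ F₂) := by
  funext A t
  refine propext ⟨fun ⟨f, hf, hfA, htf⟩ => hfA ▸ hf.1 t htf, fun h => ?_⟩
  obtain ⟨ρ, htρ, hρS, hmax⟩ :=
    Intvl.exists_maximal_subset_of_mem (S := {s | interpOf (F₁ ∪ F₂) A s}) h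
  refine ⟨⟨A, ρ⟩, ⟨hρS, fun ρ' hρρ' hρ' => hρρ'.ne.symm (hmax ρ' hρρ'.subset hρ')⟩, rfl, htρ⟩

theorem HeadOK.map {α β : Type} (g : α → β) {M : MA α} (h : HeadOK M) : HeadOK (M.map g) := by
  induction h with
  | top => exact .top
  | atom A => exact .atom _
  | boxMinus ρ _ ih => exact .boxMinus ρ ih
  | boxPlus ρ _ ih => exact .boxPlus ρ ih

/-- The time points at which the relational atom of a head `M` is forced by `M` holding at
`t`; empty for heads without a relational atom. -/
def MA.forcedSet : MA GAtom → ℚ → Set ℚ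
  | .atom _, t => {t}
  | .boxMinus ρ M, t => ⋃ s ∈ {s : ℚ | t - s ∈ ρ.1.carrier}, M.forcedSet s
  | .boxPlus ρ M, t => ⋃ s ∈ {s : ℚ | s - t ∈ ρ.1.carrier}, M.forcedSet s
  | _, _ => ∅

theorem HeadOK.sat_iff {M : MA GAtom} (h : HeadOK M) (J : Interp) (t : ℚ) :
    sat J t M ↔ ∀ A u, M.headAtom = some A → u ∈ M.forcedSet t → J A u := by
  induction h generalizing t with
  | top => simp [sat, MA.headAtom]
  | atom B => simp [sat, MA.headAtom, MA.forcedSet]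
  | boxMinus ρ _ ih | boxPlus ρ _ ih =>
    simp only [sat, ih, MA.headAtom, MA.forcedSet, Set.mem_iUnion₂, Set.mem_ofPred_eq,
      forall_exists_index]
    exact ⟨fun h A u hA s hs hu => h s hs A u hA hu, fun h s hs A u hA hu => h A u hA s hs hu⟩

/-- The least interpretation satisfying `M` on `s` makes its atom true exactly on the forced
sets. -/
theorem HeadOK.gEntails_iff {M : MA GAtom} (h : HeadOK M) {s : Set ℚ} {A : GAtom}
    {u : Set ℚ} :
    gEntails M s A u ↔ ∀ t' ∈ u, M.headAtom = some A ∧ t' ∈ ⋃ t ∈ s, M.forcedSet t := by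
  constructor
  · intro hg
    refine hg (fun B t' => M.headAtom = some B ∧ t' ∈ ⋃ t ∈ s, M.forcedSet t) ?_
    exact fun t ht => (h.sat_iff _ t).mpr fun B t' hB ht' => ⟨hB, Set.mem_biUnion ht ht'⟩
  · intro hu J hJ t' ht'
    obtain ⟨t, ht, ht't⟩ := Set.mem_iUnion₂.mp (hu t' ht').2
    exact (h.sat_iff J t).mp (hJ t ht) A t' (hu t' ht').1 ht't

theorem HeadOK.gEntails_singleton_iff {M : MA GAtom} (h : HeadOK M) {t t' : ℚ} {A : GAtom} :
    gEntails M {t} A {t'} ↔ M.headAtom = some A ∧ t' ∈ M.forcedSet t := by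
  rw [h.gEntails_iff, Set.biUnion_singleton]
  simp only [Set.mem_singleton_iff, forall_eq]

theorem Rule.headOK_subst (r : Rule) (σ : ℕ → ℕ) : HeadOK (r.head.subst σ) :=
  r.head_ok.map _

theorem Rule.interpOf_derive_iff (r : Rule) (F : Set Fact) (A : GAtom) (t' : ℚ) :
    interpOf (r.derive F) A t' ↔ ∃ (σ : ℕ → ℕ) (t : ℚ),
      (∀ M ∈ r.body, sat (interpOf F) t (M.subst σ)) ∧ gEntails (r.head.subst σ) {t} A {t'} := by
  constructor
  · rintro ⟨f, ⟨σ, ρs, hρs, -, hent, -⟩, rfl, ht'⟩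
    obtain ⟨hA, ht'H⟩ := (r.headOK_subst σ).gEntails_iff.mp hent t' ht'
    obtain ⟨t, ht, ht't⟩ := Set.mem_iUnion₂.mp ht'H
    refine ⟨σ, t, fun M hM => ?_, (r.headOK_subst σ).gEntails_singleton_iff.mpr ⟨hA, ht't⟩⟩
    obtain ⟨i, rfl⟩ := List.mem_iff_get.mp hM
    exact (hρs i).1 t (Set.mem_iInter.mp ht i)
  · rintro ⟨σ, t, hbody, hent⟩
    have hH := r.headOK_subst σ
    obtain ⟨hA, ht't⟩ := hH.gEntails_singleton_iff.mp hent
    choose ρs htρs hρsS hρsmax using fun i : Fin r.body.length =>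
      Intvl.exists_maximal_subset_of_mem
        (S := {s | sat (interpOf F) s ((r.body.get i).subst σ)})
        (hbody _ (List.get_mem r.body i))
    set H := ⋃ s ∈ ⋂ i, (ρs i).carrier, (r.head.subst σ).forcedSet s
    obtain ⟨u, ht'u, huH, humax⟩ :=
      Intvl.exists_maximal_subset_of_mem (Set.mem_biUnion (Set.mem_iInter.mpr htρs) ht't)
    have hentH : ∀ v : Set ℚ, gEntails (r.head.subst σ) (⋂ i, (ρs i).carrier) A v ↔ v ⊆ H :=
      fun v => hH.gEntails_iff.trans ⟨fun hv w hw => (hv w hw).2, fun hv w hw => ⟨hA, hv hw⟩⟩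
    refine ⟨⟨A, u⟩, ⟨σ, ρs, fun i => ⟨hρsS i, fun ρ' h₁ h₂ => hρsmax i ρ' h₁ h₂⟩, hA,
      (hentH _).mpr huH, fun ρ' huρ' hρ' => humax ρ' huρ' ((hentH _).mp hρ')⟩, rfl, ht'u⟩

theorem Program.interpOf_derive_iff (P : Program) (F : Set Fact) (A : GAtom) (t' : ℚ) :
    interpOf (P.derive F) A t' ↔ ∃ r ∈ P.rules, ∃ (σ : ℕ → ℕ) (t : ℚ),
      (∀ M ∈ r.body, sat (interpOf F) t (M.subst σ)) ∧ gEntails (r.head.subst σ) {t} A {t'} := by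
  simp only [Program.derive, interpOf_biUnion, Rule.interpOf_derive_iff]

/-- one round of rule applications followed by coalescing represents exactly
the image of the immediate consequence operator: `𝔍_{D ⋓ Π[D]} = T_Π(𝔍_D)`. -/
theorem one_step_materialisation (P : Program) (D : Dataset) :
    interpOf (coalesce D.facts (Program.derive P D.facts)) = TP P D.interp := by
  funext A t'
  rw [interpOf_coalesce, interpOf_union, Program.interpOf_derive_iff]
  rfl

end DatalogMTL
end

section
/- For all datasets D₁ and D₂, the coalescing D₁ ⋓ D₂ is a dataset (in particular, it is a finite set of facts), it has the same least model as the union: 𝔍_{D₁ ⋓ D₂} = 𝔍_{D₁ ∪ D₂}, and every fact M@ρ ∈ D₁ ⋓ D₂ carries a subset-maximal interval (no fact M@ρ' with ρ ⊊ ρ' is satisfied by 𝔍_{D₁∪D₂}). -/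
namespace DatalogMTL

lemma Intvl.ext' {ρ₁ ρ₂ : Intvl} (h : ρ₁.carrier = ρ₂.carrier) : ρ₁ = ρ₂ := by
  cases ρ₁; cases ρ₂; simp_all

lemma Fact.ext' {f g : Fact} (h1 : f.atom = g.atom) (h2 : f.ivl.carrier = g.ivl.carrier) :
    f = g := by
  have := Intvl.ext' h2
  cases f; cases g; simp_all

/-- Union of two intervals sharing a point. -/
def unionIvl (ρ₁ ρ₂ : Intvl) (p : ℚ) (h₁ : p ∈ ρ₁.carrier) (h₂ : p ∈ ρ₂.carrier) : Intvl where
  carrier := ρ₁.carrier ∪ ρ₂.carrier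
  nonempty := ⟨p, Or.inl h₁⟩
  convex := by
    rintro a b c (ha | ha) (hc | hc) hab hbc
    · exact Or.inl (ρ₁.convex ha hc hab hbc)
    · rcases le_total b p with h | h
      · exact Or.inl (ρ₁.convex ha h₁ hab h)
      · exact Or.inr (ρ₂.convex h₂ hc h hbc)
    · rcases le_total b p with h | h
      · exact Or.inr (ρ₂.convex ha h₂ hab h)
      · exact Or.inl (ρ₁.convex h₁ hc h hbc)
    · exact Or.inr (ρ₂.convex ha hc hab hbc)

lemma coalesce_max {F₁ F₂ : Set Fact} {f : Fact} (hf : f ∈ coalesce F₁ F₂)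
    {ρ' : Intvl} (hsub : f.ivl.carrier ⊆ ρ'.carrier)
    (hsat : satIvl (interpOf (F₁ ∪ F₂)) (MA.atom f.atom) ρ') :
    ρ'.carrier = f.ivl.carrier := by
  by_contra hne
  exact hf.2 ρ' (hsub.ssubset_of_ne fun h => hne h.symm) hsat

lemma coalesce_pick {F₁ F₂ : Set Fact} {f : Fact} (hf : f ∈ coalesce F₁ F₂) :
    ∃ g, g ∈ F₁ ∪ F₂ ∧ g.atom = f.atom ∧ g.ivl.carrier ⊆ f.ivl.carrier := by
  obtain ⟨t, ht⟩ := f.ivl.nonempty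
  have hI : interpOf (F₁ ∪ F₂) f.atom t := hf.1 t ht
  obtain ⟨g, hgF, hga, hgt⟩ := hI
  refine ⟨g, hgF, hga, ?_⟩
  have hsat : satIvl (interpOf (F₁ ∪ F₂)) (MA.atom f.atom)
      (unionIvl f.ivl g.ivl t ht hgt) := by
    rintro s (hs | hs)
    · exact hf.1 s hs
    · exact ⟨g, hgF, hga, hs⟩
  have heq := coalesce_max hf (ρ' := unionIvl f.ivl g.ivl t ht hgt)
    (fun s hs => Or.inl hs) hsat
  intro s hs
  have : s ∈ (unionIvl f.ivl g.ivl t ht hgt).carrier := Or.inr hs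
  rwa [heq] at this

open Classical in
noncomputable def pickFact (U : Set Fact) (f : Fact) : Fact :=
  if h : ∃ g, g ∈ U ∧ g.atom = f.atom ∧ g.ivl.carrier ⊆ f.ivl.carrier then h.choose else f

lemma pickFact_spec {U : Set Fact} {f : Fact}
    (h : ∃ g, g ∈ U ∧ g.atom = f.atom ∧ g.ivl.carrier ⊆ f.ivl.carrier) :
    pickFact U f ∈ U ∧ (pickFact U f).atom = f.atom ∧
      (pickFact U f).ivl.carrier ⊆ f.ivl.carrier := by
  classical
  rw [pickFact]
  rw [dif_pos h]
  exact h.choose_spec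

/-- the coalescing `D₁ ⋓ D₂` of two datasets is finite (hence a dataset),
has the same least model as `D₁ ∪ D₂`, and all its facts carry subset-maximal intervals. -/
theorem coalesce_is_dataset (D₁ D₂ : Dataset) :
    (coalesce D₁.facts D₂.facts).Finite ∧
    interpOf (coalesce D₁.facts D₂.facts) = interpOf (D₁.facts ∪ D₂.facts) ∧
    ∀ f ∈ coalesce D₁.facts D₂.facts, ∀ ρ' : Intvl, f.ivl.carrier ⊂ ρ'.carrier →
      ¬ satIvl (interpOf (D₁.facts ∪ D₂.facts)) (MA.atom f.atom) ρ' := by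
  set U : Set Fact := D₁.facts ∪ D₂.facts with hUdef
  refine ⟨?_, ?_, fun f hf => hf.2⟩
  · -- finiteness
    have hU : U.Finite := D₁.finite.union D₂.finite
    apply Set.Finite.of_finite_image (f := pickFact U)
    · refine hU.subset ?_
      rintro g ⟨f, hf, rfl⟩
      exact (pickFact_spec (coalesce_pick hf)).1
    · intro f₁ hf₁ f₂ hf₂ hpe
      have s₁ := pickFact_spec (coalesce_pick hf₁)
      have s₂ := pickFact_spec (coalesce_pick hf₂)
      rw [hpe] at s₁
      obtain ⟨p, hp⟩ := (pickFact U f₂).ivl.nonempty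
      have hp₁ : p ∈ f₁.ivl.carrier := s₁.2.2 hp
      have hp₂ : p ∈ f₂.ivl.carrier := s₂.2.2 hp
      have hatom : f₁.atom = f₂.atom := s₁.2.1.symm.trans s₂.2.1
      have hsat : satIvl (interpOf U) (MA.atom f₁.atom)
          (unionIvl f₁.ivl f₂.ivl p hp₁ hp₂) := by
        rintro s (hs | hs)
        · exact hf₁.1 s hs
        · have := hf₂.1 s hs
          rwa [hatom]
      have e₁ := coalesce_max hf₁ (ρ' := unionIvl f₁.ivl f₂.ivl p hp₁ hp₂)
        (fun s hs => Or.inl hs) hsat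
      have hsat₂ : satIvl (interpOf U) (MA.atom f₂.atom)
          (unionIvl f₁.ivl f₂.ivl p hp₁ hp₂) := by rwa [hatom] at hsat
      have e₂ := coalesce_max hf₂ (ρ' := unionIvl f₁.ivl f₂.ivl p hp₁ hp₂)
        (fun s hs => Or.inr hs) hsat₂
      exact Fact.ext' hatom (e₁.symm.trans e₂)
  · -- same least model
    funext A t
    apply propext
    constructor
    · rintro ⟨f, hf, rfl, ht⟩
      exact hf.1 t ht
    · intro h
      -- build the maximal interval around t
      set C : Set ℚ := {s | ∀ x, min t s ≤ x → x ≤ max t s → interpOf U A x} with hCdef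
      have htC : t ∈ C := by
        intro x hx1 hx2
        simp only [min_self, max_self] at hx1 hx2
        have : x = t := le_antisymm hx2 hx1
        rwa [this]
      have hCsat : ∀ s ∈ C, interpOf U A s := fun s hs =>
        hs s (min_le_right t s) (le_max_right t s)
      have hCconv : ∀ ⦃a b c : ℚ⦄, a ∈ C → c ∈ C → a ≤ b → b ≤ c → b ∈ C := by
        intro a b c ha hc hab hbc x hx1 hx2
        rcases le_total x t with hxt | htx
        · exact ha x (le_trans (min_le_min le_rfl hab) hx1)
            (le_trans hxt (le_max_left t a))
        · exact hc x (le_trans (min_le_left t c) htx)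
            (le_trans hx2 (max_le_max le_rfl hbc))
      set ρC : Intvl := ⟨C, ⟨t, htC⟩, hCconv⟩ with hρdef
      have hFmem : (⟨A, ρC⟩ : Fact) ∈ coalesce D₁.facts D₂.facts := by
        constructor
        · exact fun s hs => hCsat s hs
        · rintro ρ' ⟨hsub, hne⟩ hsat'
          apply hne
          intro s hs
          -- show s ∈ C
          have htρ' : t ∈ ρ'.carrier := hsub htC
          intro x hx1 hx2
          have hxρ' : x ∈ ρ'.carrier := by
            rcases le_total t s with hts | hst
            · rw [min_eq_left hts] at hx1
              rw [max_eq_right hts] at hx2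
              exact ρ'.convex htρ' hs hx1 hx2
            · rw [min_eq_right hst] at hx1
              rw [max_eq_left hst] at hx2
              exact ρ'.convex hs htρ' hx1 hx2
          exact hsat' x hxρ'
      exact ⟨⟨A, ρC⟩, hFmem, rfl, htC⟩

end DatalogMTL
end
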